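/- arXiv:0802.4045 — 3 statements merged into one kernel-verified Lean document; each statement's English description precedes it below -/
import Mathlib

section
/- Let M₁, …, M_N be finitely many nonzero real m × (nT) matrices. Then there exist a vector z ∈ ℝⁿ and a scalar λ ∈ ℝ such that for every i, Mᵢ applied to the stacked vector (z, λz, λ²z, …, λ^{T-1}z) ∈ ℝ^{nT} is nonzero. -/
open Polynomial in
/-- Finitely many nonzero real m × (nT) matrices (columns indexed by
`Fin T × Fin n`, block `j` being columns `(j, ·)`). There exist `z ∈ ℝⁿ` and `λ ∈ ℝ`
such that every `Mᵢ` applied to the stacked vector `(z, λz, …, λ^{T-1}z)` is nonzero. -/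
theorem stmt_0 (m n T N : ℕ) (hT : 1 ≤ T)
    (M : Fin N → Matrix (Fin m) (Fin T × Fin n) ℝ)
    (hM : ∀ i, M i ≠ 0) :
    ∃ (z : Fin n → ℝ) (l : ℝ),
      ∀ i, (M i).mulVec (fun p => l ^ (p.1 : ℕ) * z p.2) ≠ 0 := by
  -- pick a nonzero entry in each matrix
  have hentry : ∀ i, ∃ r p, M i r p ≠ 0 := by
    intro i
    by_contra h
    push_neg at h
    exact hM i (by ext r p; exact h r p)
  choose r p0 hp0 using hentry
  -- exponent map, injective since j < T
  set e : Fin T × Fin n → ℕ := fun p => (p.1 : ℕ) + (p.2 : ℕ) * T with he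
  have einj : Function.Injective e := by
    intro a b hab
    simp only [he] at hab
    have hma : ((a.1 : ℕ) + (a.2 : ℕ) * T) % T = a.1 := by
      rw [Nat.add_mul_mod_self_right, Nat.mod_eq_of_lt a.1.isLt]
    have hmb : ((b.1 : ℕ) + (b.2 : ℕ) * T) % T = b.1 := by
      rw [Nat.add_mul_mod_self_right, Nat.mod_eq_of_lt b.1.isLt]
    have h1 : (a.1 : ℕ) = b.1 := by rw [← hma, ← hmb, hab]
    have h2 : (a.2 : ℕ) = b.2 := by
      have hT0 : 0 < T := hT
      have := hab
      rw [h1] at this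
      exact Nat.eq_of_mul_eq_mul_right hT0 (by omega)
    exact Prod.ext (Fin.ext h1) (Fin.ext h2)
  -- the polynomial associated to matrix i (row r i)
  set P : Fin N → ℝ[X] := fun i => ∑ p : Fin T × Fin n, C (M i (r i) p) * X ^ (e p) with hP
  have hPne : ∀ i, P i ≠ 0 := by
    intro i hzero
    apply hp0 i
    have : (P i).coeff (e (p0 i)) = M i (r i) (p0 i) := by
      rw [hP]
      simp only [finset_sum_coeff, coeff_C_mul, coeff_X_pow]
      rw [Finset.sum_eq_single (p0 i)]
      · simp
      · intro b _ hb
        rw [if_neg (fun h => hb (einj h.symm)), mul_zero]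
      · simp
    rw [hzero] at this
    simpa using this.symm
  -- product polynomial is nonzero; ℝ infinite so pick a point where it's nonzero
  have hQ : (∏ i, P i) ≠ 0 := Finset.prod_ne_zero_iff.mpr (fun i _ => hPne i)
  have : ∃ t : ℝ, (∏ i, P i).eval t ≠ 0 := by
    by_contra h
    push_neg at h
    exact hQ (Polynomial.zero_of_eval_zero _ h)
  obtain ⟨t, ht⟩ := this
  have hQt : ∀ i, (P i).eval t ≠ 0 := by
    intro i
    rw [Polynomial.eval_prod] at ht
    exact Finset.prod_ne_zero_iff.mp ht i (Finset.mem_univ i)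
  refine ⟨fun k => t ^ ((k : ℕ) * T), t, fun i hv => ?_⟩
  apply hQt i
  have hrow : (M i).mulVec (fun p => t ^ (p.1 : ℕ) * t ^ ((p.2 : ℕ) * T)) (r i) = 0 := by
    rw [hv]; rfl
  rw [← hrow]
  simp only [Matrix.mulVec, dotProduct, hP, Polynomial.eval_finset_sum,
    Polynomial.eval_mul, Polynomial.eval_C, Polynomial.eval_pow, Polynomial.eval_X, he,
    pow_add]
end

section
/- Let A ∈ ℝ^{n×n}, B ∈ ℝ^{n×m}, and let V ⊆ ℝⁿ be a subspace. Then A·V ⊆ V + Im(B) holds if and only if there exists a matrix K ∈ ℝ^{m×n} such that (A + BK)·V ⊆ V. -/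
/-!
Work in `M ⧸ V`: the hypothesis says that `x ↦ -[A x]` on `V` takes values in the image of
`[B]`, so, `V` being projective, it lifts through `[B]` to a map `V → U`; extending that map
to all of `M` gives a feedback `F` with `[A x + B (F x)] = 0` on `V`.
-/

open LinearMap

theorem LinearMap.exists_comp_eq_of_range_le {R P M N : Type*} [Ring R]
    [AddCommGroup P] [Module R P] [Module.Projective R P]
    [AddCommGroup M] [Module R M] [AddCommGroup N] [Module R N]
    (f : P →ₗ[R] N) (g : M →ₗ[R] N) (h : range f ≤ range g) :
    ∃ k : P →ₗ[R] M, g ∘ₗ k = f := by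
  obtain ⟨k, hk⟩ := Module.projective_lifting_property g.rangeRestrict
    (f.codRestrict (range g) fun x => h (mem_range_self f x)) g.surjective_rangeRestrict
  exact ⟨k, ext fun x => congrArg Subtype.val (LinearMap.congr_fun hk x)⟩

section Feedback

variable {K M U : Type*} [Field K] [AddCommGroup M] [Module K M] [AddCommGroup U] [Module K U]
  {A : M →ₗ[K] M} {B : U →ₗ[K] M} {V : Submodule K M}

theorem Submodule.exists_feedback_of_mem_sup_range (h : ∀ x ∈ V, A x ∈ V ⊔ range B) :
    ∃ F : M →ₗ[K] U, ∀ x ∈ V, A x + B (F x) ∈ V := by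
  have hrange : range (-(V.mkQ ∘ₗ A ∘ₗ V.subtype)) ≤ range (V.mkQ ∘ₗ B) := by
    rintro _ ⟨x, rfl⟩
    obtain ⟨v, hv, _, ⟨u, rfl⟩, hvu⟩ := Submodule.mem_sup.mp (h x x.2)
    refine ⟨-u, ?_⟩
    simp [← hvu, (Submodule.Quotient.mk_eq_zero V).mpr hv]
  obtain ⟨k, hk⟩ := exists_comp_eq_of_range_le _ _ hrange
  obtain ⟨F, hF⟩ := LinearMap.exists_extend k
  refine ⟨F, fun x hx => (Submodule.Quotient.mk_eq_zero V).mp ?_⟩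
  have hFx : F x = k ⟨x, hx⟩ := LinearMap.congr_fun hF ⟨x, hx⟩
  have hkx : V.mkQ (B (k ⟨x, hx⟩)) = -V.mkQ (A x) := LinearMap.congr_fun hk ⟨x, hx⟩
  rw [Submodule.Quotient.mk_add, hFx]
  exact add_eq_zero_iff_eq_neg'.mpr hkx

theorem Submodule.forall_mem_sup_range_iff_exists_feedback :
    (∀ x ∈ V, A x ∈ V ⊔ range B) ↔ ∃ F : M →ₗ[K] U, ∀ x ∈ V, (A + B ∘ₗ F) x ∈ V := by
  refine ⟨exists_feedback_of_mem_sup_range, ?_⟩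
  rintro ⟨F, hF⟩ x hx
  exact Submodule.mem_sup.mpr ⟨_, hF x hx, B (-F x), mem_range_self B _, by simp⟩

end Feedback

/-- `A·V ⊆ V + Im(B)` iff there is a state feedback `K` such that
`(A + BK)·V ⊆ V`. -/
theorem stmt_6 (n m : ℕ) (A : Matrix (Fin n) (Fin n) ℝ)
    (B : Matrix (Fin n) (Fin m) ℝ) (V : Submodule ℝ (Fin n → ℝ)) :
    (∀ x ∈ V, A.mulVec x ∈ V ⊔ LinearMap.range B.mulVecLin) ↔
    (∃ K : Matrix (Fin m) (Fin n) ℝ, ∀ x ∈ V, (A + B * K).mulVec x ∈ V) := by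
  refine (V.forall_mem_sup_range_iff_exists_feedback (A := A.mulVecLin)).trans ?_
  refine Matrix.toLin'.surjective.exists.trans (exists_congr fun K => ?_)
  simp [Matrix.add_mulVec, Matrix.mulVec_mulVec]
end

section
/- Let V ⊆ ℝ^{m(N+1)} be a subspace with dim(V) < m(N+1), expressed as V = ker(G) for some matrix G. Suppose for each pair (i,h) from a finite index set one has such a proper subspace V_{ih} = ker(G_{ih}). Then there exist z ∈ ℝ^m and λ ∈ ℝ such that the stacked vector 𝐳 = (z, λz, …, λᴺz) satisfies G_{ih}𝐳 ≠ 0, i.e., 𝐳 ∉ V_{ih}, for all pairs (i,h); consequently the function u(t) = z·exp(λt) satisfies (u(t), u'(t), …, u⁽ᴺ⁾(t)) = 𝐳·exp(λt) ∉ V_{ih} for all t ∈ ℝ and all (i,h). -/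
/-- Given finitely many proper subspaces `V_{ih} = ker(G_{ih})` of
`ℝ^{m(N+1)}` (coordinates indexed by `Fin (N+1) × Fin m`), there exist `z ∈ ℝ^m` and
`λ ∈ ℝ` such that the stacked vector `𝐳 = (z, λz, …, λᴺz)` satisfies `G_{ih}𝐳 ≠ 0`
for all pairs, and consequently `(u(t), …, u⁽ᴺ⁾(t)) = 𝐳·exp(λt) ∉ V_{ih}` for all
`t` and all pairs, where `u(t) = z·exp(λt)`. -/
theorem stmt_12 (m N : ℕ) (ι : Type) [Fintype ι]
    (G : ι → Matrix (Fin (N + 1) × Fin m) (Fin (N + 1) × Fin m) ℝ)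
    (hproper : ∀ p, LinearMap.ker (G p).mulVecLin ≠ ⊤) :
    ∃ (z : Fin m → ℝ) (l : ℝ),
      (∀ p, (G p).mulVec (fun q => l ^ (q.1 : ℕ) * z q.2) ≠ 0) ∧
      (∀ p, ∀ t : ℝ,
        (G p).mulVec (fun q => l ^ (q.1 : ℕ) * z q.2 * Real.exp (l * t)) ≠ 0) := by
  -- Step 0: each G p is a nonzero matrix
  have hGne : ∀ p, G p ≠ 0 := by
    intro p hp
    apply hproper p
    rw [hp]
    simp [Matrix.mulVecLin_zero]
  -- pick a nonzero entry of G p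
  have hentry : ∀ p, ∃ q0 j0 k0, G p q0 (j0, k0) ≠ 0 := by
    intro p
    by_contra h
    push_neg at h
    apply hGne p
    ext q r
    simpa using h q r.1 r.2
  choose q0 j0 k0 hq0 using hentry
  -- polynomial P p (X) = ∑ j, G p q0 (j,k0) X^j
  set P : ι → Polynomial ℝ := fun p =>
    ∑ j : Fin (N+1), Polynomial.C (G p (q0 p) (j, k0 p)) * Polynomial.X ^ (j : ℕ) with hP
  have hPcoeff : ∀ p (j : Fin (N+1)), (P p).coeff (j : ℕ) = G p (q0 p) (j, k0 p) := by
    intro p j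
    rw [hP]
    simp only [Polynomial.finset_sum_coeff, Polynomial.coeff_C_mul, Polynomial.coeff_X_pow]
    rw [Finset.sum_eq_single j]
    · simp
    · intro b _ hb
      have : (j : ℕ) ≠ (b : ℕ) := fun h => hb (Fin.ext h.symm)
      rw [if_neg this, mul_zero]
    · simp
  have hPne : ∀ p, P p ≠ 0 := by
    intro p hp
    apply hq0 p
    rw [← hPcoeff p (j0 p), hp, Polynomial.coeff_zero]
  -- choose l avoiding all roots
  obtain ⟨l, hl⟩ : ∃ l : ℝ, l ∉ Finset.univ.biUnion fun p => (P p).roots.toFinset :=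
    Infinite.exists_notMem_finset _
  have hPl : ∀ p, Polynomial.eval l (P p) ≠ 0 := by
    intro p hev
    apply hl
    rw [Finset.mem_biUnion]
    exact ⟨p, Finset.mem_univ _, Multiset.mem_toFinset.mpr
      ((Polynomial.mem_roots (hPne p)).mpr hev)⟩
  -- the linear map z ↦ G p *ᵥ (stacked z)
  set T : (Fin m → ℝ) →ₗ[ℝ] (Fin (N+1) × Fin m → ℝ) :=
    { toFun := fun z q => l ^ (q.1 : ℕ) * z q.2
      map_add' := by intro x y; funext q; simp [mul_add]
      map_smul' := by intro c x; funext q; simp [Pi.smul_apply]; ring } with hT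
  set L : ι → (Fin m → ℝ) →ₗ[ℝ] (Fin (N+1) × Fin m → ℝ) :=
    fun p => (G p).mulVecLin.comp T with hL
  have hLker : ∀ p, LinearMap.ker (L p) ≠ ⊤ := by
    intro p hk
    -- evaluate at z = single (k0 p) 1
    have h1 : L p (Pi.single (k0 p) 1) = 0 := by
      have : Pi.single (k0 p) (1:ℝ) ∈ LinearMap.ker (L p) := hk ▸ Submodule.mem_top
      exact this
    have h2 : (L p (Pi.single (k0 p) 1)) (q0 p) = Polynomial.eval l (P p) := by
      rw [hL]
      simp only [LinearMap.comp_apply, Matrix.mulVecLin_apply, hT, LinearMap.coe_mk,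
        AddHom.coe_mk]
      rw [Matrix.mulVec, dotProduct, hP, Polynomial.eval_finset_sum]
      rw [Fintype.sum_prod_type]
      refine Finset.sum_congr rfl fun j _ => ?_
      rw [Finset.sum_eq_single (k0 p)]
      · rw [Polynomial.eval_mul, Polynomial.eval_C, Polynomial.eval_pow, Polynomial.eval_X,
          Pi.single_eq_same, mul_one]
      · intro b _ hb
        simp [Pi.single_apply, hb]
      · simp
    rw [h1] at h2
    exact hPl p h2.symm
  -- choose z outside the union of kernels
  have hne : (⋃ p, ((LinearMap.ker (L p) : Submodule ℝ (Fin m → ℝ)) : Set (Fin m → ℝ))) ≠ Set.univ := by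
    intro h
    obtain ⟨p, hp⟩ := Subspace.exists_eq_top_of_iUnion_eq_univ h
    exact hLker p hp
  obtain ⟨z, hz⟩ : ∃ z, z ∉ ⋃ p, ((LinearMap.ker (L p) : Submodule ℝ (Fin m → ℝ)) : Set (Fin m → ℝ)) := by
    by_contra h
    push_neg at h
    exact hne (Set.eq_univ_of_forall h)
  have hzp : ∀ p, (G p).mulVec (fun q => l ^ (q.1 : ℕ) * z q.2) ≠ 0 := by
    intro p hc
    apply hz
    exact Set.mem_iUnion.2 ⟨p, by exact hc⟩
  refine ⟨z, l, hzp, ?_⟩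
  intro p t hc
  apply hzp p
  have he : Real.exp (l * t) ≠ 0 := Real.exp_ne_zero _
  have : (fun q : Fin (N+1) × Fin m => l ^ (q.1 : ℕ) * z q.2 * Real.exp (l * t))
      = Real.exp (l * t) • (fun q => l ^ (q.1 : ℕ) * z q.2) := by
    funext q; simp [Pi.smul_apply, smul_eq_mul]; ring
  rw [this, Matrix.mulVec_smul] at hc
  exact (smul_eq_zero.mp hc).resolve_left he
end
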